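/- arXiv:2010.12905 — 2 statements merged into one kernel-verified Lean document; each statement's English description precedes it below -/
import Mathlib

section
/- Let Φ, Ψ : ℝ → ℝ be functions such that u ↦ Φ(-u) and u ↦ Ψ(-u) are monotonically increasing and satisfy Φ(-u) ≥ 𝟙[u ≤ 0] and Ψ(-u) ≥ 𝟙[u ≤ 0] for all u. Then for any α, β > 0, any functions f, r : X → ℝ, any x ∈ X, any y ∈ {-1,+1}, and any cost c > 0, the rejection loss satisfies 𝟙[y·f(x) ≤ 0]·𝟙[r(x) ≥ 0] + c·𝟙[r(x) ≤ 0] ≤ Φ((α/2)(r(x) − y·f(x))) + c·Ψ(−β·r(x)). -/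
open Classical in
/-- Indicator of a proposition, as a real number. -/
noncomputable def ind (P : Prop) : ℝ := if P then 1 else 0

theorem rejection_loss_le_convex_surrogate
    {X : Type*} (Φ Ψ : ℝ → ℝ)
    (hΦmono : Monotone fun u : ℝ => Φ (-u))
    (hΨmono : Monotone fun u : ℝ => Ψ (-u))
    (hΦub : ∀ u : ℝ, ind (u ≤ 0) ≤ Φ (-u))
    (hΨub : ∀ u : ℝ, ind (u ≤ 0) ≤ Ψ (-u))
    (hΦpos : ∀ u : ℝ, 0 ≤ Φ u) (hΨpos : ∀ u : ℝ, 0 ≤ Ψ u)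
    (α β : ℝ) (hα : 0 < α) (hβ : 0 < β)
    (f r : X → ℝ) (x : X) (y : ℝ) (hy : y = -1 ∨ y = 1)
    (c : ℝ) (hc : 0 < c) :
    ind (y * f x ≤ 0) * ind (0 ≤ r x) + c * ind (r x ≤ 0)
      ≤ Φ ((α / 2) * (r x - y * f x)) + c * Ψ (-β * r x) := by
  have h1 : ind (y * f x ≤ 0) * ind (0 ≤ r x) ≤ Φ ((α / 2) * (r x - y * f x)) := by
    by_cases h : y * f x ≤ 0 ∧ 0 ≤ r x
    · have hval : ind (y * f x ≤ 0) * ind (0 ≤ r x) = 1 := by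
        simp [ind, h.1, h.2]
      rw [hval]
      have harg : (0 : ℝ) ≤ (α / 2) * (r x - y * f x) := by
        apply mul_nonneg (by linarith)
        linarith [h.1, h.2]
      have h0 := hΦub (-((α / 2) * (r x - y * f x)))
      rw [neg_neg] at h0
      have : ind (-((α / 2) * (r x - y * f x)) ≤ 0) = 1 := by
        simp [ind, neg_nonpos.mpr harg]
      linarith [this ▸ h0]
    · have hval : ind (y * f x ≤ 0) * ind (0 ≤ r x) = 0 := by
        rcases not_and_or.mp h with h' | h' <;> simp [ind, h']
      rw [hval]; exact hΦpos _
  have h2 : c * ind (r x ≤ 0) ≤ c * Ψ (-β * r x) := by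
    apply mul_le_mul_of_nonneg_left _ hc.le
    by_cases h : r x ≤ 0
    · have hval : ind (r x ≤ 0) = 1 := by simp [ind, h]
      rw [hval]
      have h0 : (1 : ℝ) ≤ Ψ (-(β * r x)) := by
        have := hΨub (β * r x)
        have hb : β * r x ≤ 0 := mul_nonpos_of_nonneg_of_nonpos hβ.le h
        simpa [ind, hb] using this
      have : -(β * r x) = -β * r x := by ring
      linarith [this ▸ h0]
    · have hval : ind (r x ≤ 0) = 0 := by simp [ind, h]
      rw [hval]; exact hΨpos _
  linarith
end

section
/- Empirical Rademacher complexity of the adversarially modified linear class (upper bound): Let x₁,…,xₙ ∈ ℝ^d, y₁,…,yₙ ∈ {−1,+1}, W > 0, ε > 0, and 1/p + 1/q = 1 with p, q ≥ 1. Define F = {x ↦ ⟨x, w⟩ : ‖w‖_p ≤ W} and F̃ = {(x,y) ↦ min_{‖x'−x‖_∞ ≤ ε} y⟨x', w⟩ : ‖w‖_p ≤ W}. Since min_{‖x'−x‖_∞ ≤ ε} y⟨x', w⟩ = y⟨x, w⟩ − ε‖w‖₁, the empirical Rademacher complexity satisfies R_S(F̃) ≤ R_S(F) + ε·W·d^{1/q}/√n,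 where R_S(H) = (1/n)·E_σ[sup_{h∈H} Σᵢ σᵢ h(xᵢ, yᵢ)] and σᵢ are i.i.d. uniform ±1 random variables. -/
/-!
For fixed `w` the inner minimum is attained at `x' = xᵢ - ε yᵢ sign w`, so the adversarial class
consists of the vectors `(yᵢ ⟨xᵢ, w⟩ - ε ‖w‖₁)ᵢ`. The fixed signs `yᵢ` are absorbed by the
measure-preserving substitution `σᵢ ↦ σᵢ yᵢ`, and the common shift `ε ‖w‖₁ ≤ ε W d^{1/q}` (Hölder)
costs at most `ε W d^{1/q} E|∑ σᵢ| / n ≤ ε W d^{1/q} / √n`, since `E (∑ σᵢ)² = n`.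
-/

open Finset

/-- Empirical Rademacher complexity of a set of value vectors on a sample of size `n`. -/
noncomputable def radComp {n : ℕ} (V : Set (Fin n → ℝ)) : ℝ :=
  (n : ℝ)⁻¹ * ((2 : ℝ) ^ n)⁻¹ *
    ∑ σ : Fin n → Bool,
      sSup {s : ℝ | ∃ v ∈ V, s = ∑ i, (if σ i then (1 : ℝ) else -1) * v i}

def rademacherSign (b : Bool) : ℝ := if b then 1 else -1

@[simp] lemma rademacherSign_true : rademacherSign true = 1 := rfl
@[simp] lemma rademacherSign_false : rademacherSign false = -1 := rfl

lemma rademacherSign_mul_self (b : Bool) : rademacherSign b * rademacherSign b = 1 := by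
  cases b <;> norm_num

lemma abs_rademacherSign (b : Bool) : |rademacherSign b| = 1 := by
  cases b <;> norm_num

lemma rademacherSign_beq (a b : Bool) :
    rademacherSign (a == b) = rademacherSign a * rademacherSign b := by
  cases a <;> cases b <;> norm_num

section Signs

variable {ι : Type*} [Fintype ι] [DecidableEq ι]

lemma sum_rademacherSign_mul_rademacherSign_of_ne {i j : ι} (hij : i ≠ j) :
    ∑ σ : ι → Bool, rademacherSign (σ i) * rademacherSign (σ j) = 0 := by
  let flip : (ι → Bool) → (ι → Bool) := fun σ => Function.update σ i (!σ i)
  have hflip : Function.Involutive flip := fun σ => by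
    ext k; by_cases hk : k = i <;> simp [flip, hk]
  have hsum := hflip.bijective.sum_comp fun σ => rademacherSign (σ i) * rademacherSign (σ j)
  have hneg : ∀ σ, rademacherSign (flip σ i) * rademacherSign (flip σ j)
      = -(rademacherSign (σ i) * rademacherSign (σ j)) := fun σ => by
    simp only [flip, Function.update_self, Function.update_of_ne hij.symm]
    cases σ i <;> simp
  simp only [hneg, sum_neg_distrib] at hsum
  linarith

lemma sum_sq_sum_rademacherSign :
    ∑ σ : ι → Bool, (∑ i, rademacherSign (σ i)) ^ 2 = 2 ^ Fintype.card ι * Fintype.card ι := by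
  have hdiag : ∀ i : ι, ∑ σ : ι → Bool, ∑ j, rademacherSign (σ i) * rademacherSign (σ j)
      = 2 ^ Fintype.card ι := fun i => by
    rw [sum_comm, sum_eq_single i (fun j _ hj => sum_rademacherSign_mul_rademacherSign_of_ne
      (Ne.symm hj)) (by simp)]
    simp [rademacherSign_mul_self]
  simp_rw [sq, sum_mul_sum]
  rw [sum_comm, sum_congr rfl fun i _ => hdiag i]
  simp [mul_comm]

lemma sum_abs_sum_rademacherSign_le :
    ∑ σ : ι → Bool, |∑ i, rademacherSign (σ i)|
      ≤ 2 ^ Fintype.card ι * √(Fintype.card ι) := by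
  have hcs := sq_sum_le_card_mul_sum_sq (s := univ)
    (f := fun σ : ι → Bool => |∑ i, rademacherSign (σ i)|)
  simp only [sq_abs, sum_sq_sum_rademacherSign, card_univ, Fintype.card_fun,
    Fintype.card_bool] at hcs
  calc _ ≤ √((2 ^ Fintype.card ι) ^ 2 * Fintype.card ι) :=
        Real.le_sqrt_of_sq_le (by push_cast at hcs; linarith)
    _ = _ := by rw [Real.sqrt_mul (by positivity), Real.sqrt_sq (by positivity)]

end Signs

lemma sum_abs_le_card_rpow_mul {ι : Type*} [Fintype ι] {p q : ℝ} (hpq : p.HolderConjugate q)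
    (w : ι → ℝ) :
    ∑ j, |w j| ≤ (Fintype.card ι : ℝ) ^ (1 / q) * (∑ j, |w j| ^ p) ^ (1 / p) := by
  simpa [mul_comm] using Real.inner_le_Lp_mul_Lq univ (fun j => |w j|) (fun _ => 1) hpq

lemma sum_abs_sum_mul_le {ι κ : Type*} [Fintype ι] [Fintype κ] (x : ι → κ → ℝ) (w : κ → ℝ) :
    ∑ i, |∑ j, x i j * w j| ≤ (∑ i, ∑ j, |x i j|) * ∑ j, |w j| := by
  rw [sum_mul]
  refine sum_le_sum fun i _ => (abs_sum_le_sum_abs _ _).trans ?_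
  rw [sum_mul]
  exact sum_le_sum fun j _ => by
    rw [abs_mul]
    exact mul_le_mul_of_nonneg_left (single_le_sum (fun k _ => abs_nonneg (w k)) (mem_univ j))
      (abs_nonneg _)

lemma isLeast_sum_mul_of_abs_sub_le {ι : Type*} [Fintype ι] (x v : ι → ℝ) {ε : ℝ} (hε : 0 ≤ ε) :
    IsLeast {t | ∃ x' : ι → ℝ, (∀ j, |x' j - x j| ≤ ε) ∧ t = ∑ j, x' j * v j}
      (∑ j, x j * v j - ε * ∑ j, |v j|) := by
  constructor
  · refine ⟨fun j => x j - ε * SignType.sign (v j), fun j => ?_, ?_⟩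
    · rw [sub_sub_cancel_left, abs_neg, abs_mul, abs_of_nonneg hε]
      refine mul_le_of_le_one_right hε ?_
      rcases (SignType.sign (v j)).trichotomy with h | h | h <;> simp [h]
    · simp only [sub_mul, sum_sub_distrib, mul_sum, mul_assoc, sign_mul_self]
  · rintro _ ⟨x', hx', rfl⟩
    have hterm : ∀ j, x j * v j - ε * |v j| ≤ x' j * v j := fun j => by
      have := neg_abs_le ((x' j - x j) * v j)
      rw [abs_mul] at this
      nlinarith [mul_le_mul_of_nonneg_right (hx' j) (abs_nonneg (v j))]
    simpa only [mul_sum, sum_sub_distrib] using sum_le_sum fun j _ => hterm j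

lemma sInf_mul_sum_mul_of_abs_sub_le {ι : Type*} [Fintype ι] (x w : ι → ℝ) (y : ℝ) {ε : ℝ}
    (hε : 0 ≤ ε) :
    sInf {t | ∃ x' : ι → ℝ, (∀ j, |x' j - x j| ≤ ε) ∧ t = y * ∑ j, x' j * w j}
      = y * ∑ j, x j * w j - ε * |y| * ∑ j, |w j| := by
  have hmul : ∀ x' : ι → ℝ, y * ∑ j, x' j * w j = ∑ j, x' j * (y * w j) := fun x' => by
    rw [mul_sum]; exact sum_congr rfl fun j _ => by ring
  simp only [hmul, (isLeast_sum_mul_of_abs_sub_le x (fun j => y * w j) hε).csInf_eq, abs_mul,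
    ← mul_sum, mul_assoc]

section Rademacher

variable {n : ℕ}

def rademacherCorrelations (V : Set (Fin n → ℝ)) (σ : Fin n → Bool) : Set ℝ :=
  {s | ∃ v ∈ V, s = ∑ i, rademacherSign (σ i) * v i}

lemma radComp_eq_sum_sSup (V : Set (Fin n → ℝ)) :
    radComp V = (n : ℝ)⁻¹ * ((2 : ℝ) ^ n)⁻¹ * ∑ σ, sSup (rademacherCorrelations V σ) :=
  rfl

lemma bddAbove_rademacherCorrelations {V : Set (Fin n → ℝ)} {M : ℝ}
    (hV : ∀ v ∈ V, ∑ i, |v i| ≤ M) (σ : Fin n → Bool) :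
    BddAbove (rademacherCorrelations V σ) := by
  refine ⟨M, ?_⟩
  rintro _ ⟨v, hv, rfl⟩
  refine (sum_le_sum fun i _ => ?_).trans (hV v hv)
  simpa only [abs_mul, abs_rademacherSign, one_mul] using le_abs_self (rademacherSign (σ i) * v i)

lemma rademacherCorrelations_image_rademacherSign_mul (c : Fin n → Bool) (V : Set (Fin n → ℝ))
    (σ : Fin n → Bool) :
    rademacherCorrelations ((fun v i => rademacherSign (c i) * v i) '' V) σ
      = rademacherCorrelations V fun i => σ i == c i := by
  ext s
  simp [rademacherCorrelations, rademacherSign_beq, mul_assoc]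

lemma radComp_image_rademacherSign_mul (c : Fin n → Bool) (V : Set (Fin n → ℝ)) :
    radComp ((fun v i => rademacherSign (c i) * v i) '' V) = radComp V := by
  have hflip : Function.Involutive fun σ : Fin n → Bool => fun i => σ i == c i := fun σ => by
    ext i; simp only; cases σ i <;> cases c i <;> rfl
  simp only [radComp_eq_sum_sSup, rademacherCorrelations_image_rademacherSign_mul]
  rw [hflip.bijective.sum_comp fun σ => sSup (rademacherCorrelations V σ)]

section Translation

variable {V V' : Set (Fin n → ℝ)} {C : ℝ}

lemma sSup_rademacherCorrelations_le_of_forall_eq_sub (hV' : V'.Nonempty)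
    (h : ∀ v' ∈ V', ∃ v ∈ V, ∃ b, |b| ≤ C ∧ v' = fun i => v i - b)
    {σ : Fin n → Bool} (hV : BddAbove (rademacherCorrelations V σ)) :
    sSup (rademacherCorrelations V' σ)
      ≤ sSup (rademacherCorrelations V σ) + C * |∑ i, rademacherSign (σ i)| := by
  obtain ⟨v₀, hv₀⟩ := hV'
  refine csSup_le ⟨_, v₀, hv₀, rfl⟩ ?_
  rintro _ ⟨_, hv', rfl⟩
  obtain ⟨v, hv, b, hb, rfl⟩ := h _ hv'
  have hcorr : ∑ i, rademacherSign (σ i) * v i ≤ sSup (rademacherCorrelations V σ) :=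
    le_csSup hV ⟨v, hv, rfl⟩
  have hshift : -(b * ∑ i, rademacherSign (σ i)) ≤ C * |∑ i, rademacherSign (σ i)| :=
    (neg_le_abs _).trans (by rw [abs_mul]; gcongr)
  calc ∑ i, rademacherSign (σ i) * (v i - b)
      = ∑ i, rademacherSign (σ i) * v i - b * ∑ i, rademacherSign (σ i) := by
        rw [mul_sum, ← sum_sub_distrib]; simp only [mul_sub, mul_comm b]
    _ ≤ _ := by linarith

lemma radComp_le_add_div_sqrt_of_forall_eq_sub (hV' : V'.Nonempty)
    (h : ∀ v' ∈ V', ∃ v ∈ V, ∃ b, |b| ≤ C ∧ v' = fun i => v i - b)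
    (hV : ∀ σ, BddAbove (rademacherCorrelations V σ)) :
    radComp V' ≤ radComp V + C / √n := by
  have hC : 0 ≤ C := by
    obtain ⟨v', hv'⟩ := hV'
    obtain ⟨-, -, b, hb, -⟩ := h v' hv'
    exact (abs_nonneg b).trans hb
  have hsum : ∑ σ, sSup (rademacherCorrelations V' σ)
      ≤ ∑ σ, sSup (rademacherCorrelations V σ) + C * (2 ^ n * √n) := by
    calc ∑ σ, sSup (rademacherCorrelations V' σ)
        ≤ ∑ σ : Fin n → Bool, (sSup (rademacherCorrelations V σ)
            + C * |∑ i, rademacherSign (σ i)|) :=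
          sum_le_sum fun σ _ => sSup_rademacherCorrelations_le_of_forall_eq_sub hV' h (hV σ)
      _ ≤ _ := by
        rw [sum_add_distrib, ← mul_sum]
        gcongr
        simpa using sum_abs_sum_rademacherSign_le (ι := Fin n)
  calc radComp V'
      ≤ (n : ℝ)⁻¹ * ((2 : ℝ) ^ n)⁻¹
          * (∑ σ, sSup (rademacherCorrelations V σ) + C * (2 ^ n * √n)) := by
        rw [radComp_eq_sum_sSup]; gcongr
    _ = radComp V + C * (√n / n) := by
        rw [radComp_eq_sum_sSup]; field_simp
    _ = radComp V + C / √n := by rw [Real.sqrt_div_self', mul_one_div]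

end Translation

end Rademacher

theorem adversarial_linear_rademacher_bound_general
    {d n : ℕ}
    (x : Fin n → Fin d → ℝ) (y : Fin n → ℝ) (hy : ∀ i, y i = -1 ∨ y i = 1)
    (W ε p q : ℝ) (hW : 0 < W) (hε : 0 < ε)
    (hp : 1 ≤ p) (hq : 1 ≤ q) (hpq : 1 / p + 1 / q = 1) :
    radComp {v : Fin n → ℝ | ∃ w : Fin d → ℝ,
        (∑ j, |w j| ^ p) ^ (1 / p) ≤ W ∧
        ∀ i, v i = sInf {t : ℝ | ∃ x' : Fin d → ℝ,
          (∀ j, |x' j - x i j| ≤ ε) ∧ t = y i * ∑ j, x' j * w j}}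
      ≤ radComp {v : Fin n → ℝ | ∃ w : Fin d → ℝ,
            (∑ j, |w j| ^ p) ^ (1 / p) ≤ W ∧ ∀ i, v i = ∑ j, x i j * w j}
        + ε * W * (d : ℝ) ^ (1 / q) / Real.sqrt n := by
  have hconj : p.HolderConjugate q :=
    ⟨by simpa only [one_div, inv_one] using hpq, by linarith, by linarith⟩
  obtain ⟨c, rfl⟩ : ∃ c : Fin n → Bool, y = fun i => rademacherSign (c i) :=
    ⟨fun i => decide (y i = 1), funext fun i => by rcases hy i with h | h <;> norm_num [h]⟩
  have hlin : {v : Fin n → ℝ | ∃ w : Fin d → ℝ,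
        (∑ j, |w j| ^ p) ^ (1 / p) ≤ W ∧ ∀ i, v i = ∑ j, x i j * w j}
      = (fun w i => ∑ j, x i j * w j) '' {w : Fin d → ℝ | (∑ j, |w j| ^ p) ^ (1 / p) ≤ W} := by
    ext v; simp [funext_iff, eq_comm]
  rw [hlin, ← radComp_image_rademacherSign_mul c (_ '' _), Set.image_image]
  set B := {w : Fin d → ℝ | (∑ j, |w j| ^ p) ^ (1 / p) ≤ W}
  have hB0 : (0 : Fin d → ℝ) ∈ B := by
    simp [B, Real.zero_rpow hconj.ne_zero, Real.zero_rpow (inv_ne_zero hconj.ne_zero), hW.le]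
  have hl1 : ∀ w ∈ B, ∑ j, |w j| ≤ W * (d : ℝ) ^ (1 / q) := fun w hw => by
    simpa [mul_comm] using (sum_abs_le_card_rpow_mul hconj w).trans
      (mul_le_mul_of_nonneg_left hw (by positivity))
  refine radComp_le_add_div_sqrt_of_forall_eq_sub ⟨_, 0, hB0, fun i => rfl⟩ ?_
    (bddAbove_rademacherCorrelations (M := (∑ i, ∑ j, |x i j|) * (W * (d : ℝ) ^ (1 / q))) ?_)
  · rintro v ⟨w, hw, hv⟩
    refine ⟨_, ⟨w, hw, rfl⟩, ε * ∑ j, |w j|, ?_, funext fun i => ?_⟩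
    · rw [abs_of_nonneg (by positivity), mul_assoc]
      exact mul_le_mul_of_nonneg_left (hl1 w hw) hε.le
    · rw [hv i, sInf_mul_sum_mul_of_abs_sub_le _ _ _ hε.le, abs_rademacherSign, mul_one]
  · rintro _ ⟨w, hw, rfl⟩
    simp only [abs_mul, abs_rademacherSign, one_mul]
    exact (sum_abs_sum_mul_le x w).trans (by gcongr; exact hl1 w hw)

theorem adversarial_linear_rademacher_bound
    {d n : ℕ} (hn : 0 < n)
    (x : Fin n → Fin d → ℝ) (y : Fin n → ℝ) (hy : ∀ i, y i = -1 ∨ y i = 1)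
    (W ε p q : ℝ) (hW : 0 < W) (hε : 0 < ε)
    (hp : 1 ≤ p) (hq : 1 ≤ q) (hpq : 1 / p + 1 / q = 1) :
    radComp {v : Fin n → ℝ | ∃ w : Fin d → ℝ,
        (∑ j, |w j| ^ p) ^ (1 / p) ≤ W ∧
        ∀ i, v i = sInf {t : ℝ | ∃ x' : Fin d → ℝ,
          (∀ j, |x' j - x i j| ≤ ε) ∧ t = y i * ∑ j, x' j * w j}}
      ≤ radComp {v : Fin n → ℝ | ∃ w : Fin d → ℝ,
            (∑ j, |w j| ^ p) ^ (1 / p) ≤ W ∧ ∀ i, v i = ∑ j, x i j * w j}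
        + ε * W * (d : ℝ) ^ (1 / q) / Real.sqrt n :=
  adversarial_linear_rademacher_bound_general x y hy W ε p q hW hε hp hq hpq
end
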